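/- Let (K,v) be a henselian valued field and F ∈ K[x] monic, irreducible, and separable of degree n > 1, with root θ. Define Krasner's constant Ω(F) = max{ v(θ − θ') : θ' a root of F, θ' ≠ θ }. Then for every monic g ∈ K[x] with 0 < deg(g) < n, one has v(g(θ))/deg(g) ≤ Ω(F). -/

import Mathlib

open Polynomial

section Preamble

variable {Λ : Type*} [AddCommGroup Λ] [LinearOrder Λ] [IsOrderedAddMonoid Λ]

/-- A (Krull) valuation on a commutative ring, written additively, with value `⊤` at `0`. -/
def IsVal {R : Type*} [CommRing R] (μ : R → WithTop Λ) : Prop :=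
  μ 0 = ⊤ ∧ μ 1 = 0 ∧ (∀ a b, μ (a * b) = μ a + μ b) ∧ ∀ a b, min (μ a) (μ b) ≤ μ (a + b)

variable {K : Type*} [Field K]

/-- `μ` is a valuation on `K[x]` whose restriction to `K` is `v`. -/
def ExtendsVal (v : K → WithTop Λ) (μ : Polynomial K → WithTop Λ) : Prop :=
  ∀ a : K, μ (Polynomial.C a) = v a

/-- `a ∼_μ b`: the initial terms of `a` and `b` in the graded algebra of `μ` coincide. -/
def MuEquiv (μ : Polynomial K → WithTop Λ) (a b : Polynomial K) : Prop :=
  (μ a = μ b ∧ μ a < μ (a - b)) ∨ (μ a = ⊤ ∧ μ b = ⊤)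

/-- `h ∣_μ g` : the initial term of `h` divides the initial term of `g` in the
graded algebra `G_μ`. -/
def MuDvd (μ : Polynomial K → WithTop Λ) (h g : Polynomial K) : Prop :=
  ∃ c, MuEquiv μ (h * c) g

/-- `g` is `μ`-minimal: `g ∤_μ f` for all nonzero `f` of degree smaller than `deg g`. -/
def MuMinimal (μ : Polynomial K → WithTop Λ) (g : Polynomial K) : Prop :=
  ∀ f : Polynomial K, f ≠ 0 → f.degree < g.degree → ¬ MuDvd μ g f

/-- `g` is `μ`-irreducible: the principal ideal of `G_μ` generated by the initial term of `g`
is a nonzero prime ideal. -/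
def MuIrreducible (μ : Polynomial K → WithTop Λ) (g : Polynomial K) : Prop :=
  μ g ≠ ⊤ ∧ ¬ MuDvd μ g 1 ∧ ∀ a b : Polynomial K, MuDvd μ g (a * b) → MuDvd μ g a ∨ MuDvd μ g b

/-- A (MacLane–Vaquié) key polynomial for `μ`: monic, `μ`-minimal and `μ`-irreducible. -/
def IsKeyPol (μ : Polynomial K → WithTop Λ) (φ : Polynomial K) : Prop :=
  φ.Monic ∧ MuMinimal μ φ ∧ MuIrreducible μ φ

/-- A key polynomial for `μ` of minimal degree. -/
def MinKeyPol (μ : Polynomial K → WithTop Λ) (φ : Polynomial K) : Prop :=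
  IsKeyPol μ φ ∧ ∀ ψ : Polynomial K, IsKeyPol μ ψ → φ.degree ≤ ψ.degree

/-- The coefficients of the `g`-adic expansion `f = ∑ a_s g^s`, `deg a_s < deg g`. -/
noncomputable def adicCoeff (g : Polynomial K) : Polynomial K → ℕ → Polynomial K
  | f, 0 => f %ₘ g
  | f, (s + 1) => adicCoeff g (f /ₘ g) s

/-- The truncation `μ_g` of `μ` : `μ_g (∑ a_s g^s) = min_s μ (a_s g^s)`. -/
noncomputable def truncVal (μ : Polynomial K → WithTop Λ) (g f : Polynomial K) : WithTop Λ :=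
  (Finset.range (f.natDegree + 1)).inf fun s => μ (adicCoeff g f s * g ^ s)

/-- The augmented valuation `[μ; φ, γ]`, acting on `φ`-expansions by
`ν(∑ a_s φ^s) = min_s (μ(a_s) + s γ)`. -/
noncomputable def augVal (μ : Polynomial K → WithTop Λ) (φ : Polynomial K) (γ : WithTop Λ)
    (f : Polynomial K) : WithTop Λ :=
  (Finset.range (f.natDegree + 1)).inf fun s => μ (adicCoeff φ f s) + s • γ

end Preamble

/-!
Were `v(θ - β) > Ω` for some root `β` of `g`, Krasner's lemma would give `θ ∈ K(β)`, hence
`deg F ≤ [K(β) : K] ≤ deg g`. So each of the `deg g` factors `θ - β` of `g(θ)` has value at most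
`Ω`. Krasner's lemma itself: if `θ ∉ K(β)`, some `K(β)`-embedding `σ` of `K̄` moves `θ`; since the
extension of `v` is unique, `σ` preserves it, so `v(σθ - β) = v(θ - β)` and the ultrametric
inequality gives `v(θ - σθ) ≥ v(θ - β)`.
-/

open IntermediateField

theorem IntermediateField.exists_algHom_apply_ne {K E : Type*} [Field K] [Field E] [Algebra K E]
    [IsAlgClosed E] [Algebra.IsAlgebraic K E] {L : IntermediateField K E} {θ : E}
    (hsep : IsSeparable K θ) (hθ : θ ∉ L) :
    ∃ τ : E →ₐ[L] E, τ θ ≠ θ := by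
  have hθ' : θ ∉ (⊥ : Subalgebra L E) := by
    rintro ⟨⟨x, hx⟩, rfl⟩
    exact hθ hx
  obtain ⟨θ', hne, hconj⟩ :=
    (notMem_iff_exists_ne_and_isConjRoot (hsep.tower_top L) (IsAlgClosed.splits _)).mp hθ'
  obtain ⟨τ, hτ⟩ := exists_algHom_of_splits_of_aeval
    (fun x => ⟨(Algebra.IsIntegral.isIntegral (R := K) x).tower_top, IsAlgClosed.splits _⟩)
    hconj.aeval_eq_zero
  exact ⟨τ, hτ ▸ hne.symm⟩

theorem IntermediateField.natDegree_minpoly_le_of_mem_adjoin_simple {K E : Type*} [Field K]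
    [Field E] [Algebra K E] {θ β : E} (hβ : IsIntegral K β) (hθ : θ ∈ K⟮β⟯) :
    (minpoly K θ).natDegree ≤ (minpoly K β).natDegree := by
  have := adjoin.finiteDimensional hβ
  rw [← adjoin.finrank hβ, ← minpoly_eq (⟨θ, hθ⟩ : K⟮β⟯)]
  exact minpoly.natDegree_le _

namespace IsVal

variable {Λ : Type*} [AddCommGroup Λ] [LinearOrder Λ]
  {R : Type*} [CommRing R] {μ : R → WithTop Λ}

theorem map_neg [IsOrderedAddMonoid Λ] (hμ : IsVal μ) (x : R) : μ (-x) = μ x := by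
  obtain ⟨-, h1, hmul, -⟩ := hμ
  have hsq : μ (-1) + μ (-1) = 0 := by rw [← hmul, neg_mul_neg, one_mul, h1]
  have hneg1 : μ (-1) = 0 := by
    obtain ⟨c, hc⟩ := WithTop.ne_top_iff_exists.mp
      (WithTop.add_ne_top.mp (hsq ▸ WithTop.zero_ne_top)).1
    rw [← hc] at hsq ⊢
    have hcc : c + c = 0 := by exact_mod_cast hsq
    rcases lt_trichotomy c 0 with hneg | hzero | hpos
    · exact absurd hcc (add_neg hneg hneg).ne
    · rw [hzero, WithTop.coe_zero]
    · exact absurd hcc (add_pos hpos hpos).ne'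
  rw [neg_eq_neg_one_mul, hmul, hneg1, zero_add]

theorem map_sub_comm [IsOrderedAddMonoid Λ] (hμ : IsVal μ) (x y : R) :
    μ (x - y) = μ (y - x) := by
  rw [← neg_sub, hμ.map_neg]

theorem comp {S : Type*} [CommRing S] (hμ : IsVal μ) (σ : S →+* R) : IsVal (μ ∘ σ) := by
  obtain ⟨h0, h1, hmul, hadd⟩ := hμ
  exact ⟨by simp [h0], by simp [h1], fun a b => by simp [hmul], fun a b => by simpa using hadd _ _⟩

theorem multiset_prod_le [IsOrderedAddMonoid Λ] (hμ : IsVal μ) {Ω : WithTop Λ} (s : Multiset R)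
    (h : ∀ x ∈ s, μ x ≤ Ω) :
    μ s.prod ≤ Multiset.card s • Ω := by
  obtain ⟨-, h1, hmul, -⟩ := hμ
  induction s using Multiset.induction with
  | empty => simpa using h1.le
  | cons a t ih =>
    rw [Multiset.prod_cons, hmul, Multiset.card_cons, succ_nsmul']
    exact add_le_add (h a (Multiset.mem_cons_self a t))
      (ih fun x hx => h x (Multiset.mem_cons_of_mem hx))

variable {K E : Type*} [Field K] [Field E] [Algebra K E] {v : K → WithTop Λ} {w : E → WithTop Λ}

theorem aeval_le_natDegree_nsmul [IsOrderedAddMonoid Λ] [IsAlgClosed E] (hw : IsVal w)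
    {g : K[X]} (hg : g.Monic) {θ : E} {Ω : WithTop Λ}
    (hroots : ∀ β, aeval β g = 0 → w (θ - β) ≤ Ω) :
    w (aeval θ g) ≤ g.natDegree • Ω := by
  rw [(IsAlgClosed.splits _).aeval_eq_prod_aroots_of_monic hg,
    ← IsAlgClosed.card_aroots_eq_natDegree (B := E), ← Multiset.card_map (θ - ·)]
  refine hw.multiset_prod_le _ fun x hx => ?_
  obtain ⟨β, hβ, rfl⟩ := Multiset.mem_map.mp hx
  exact hroots β (mem_aroots.mp hβ).2

theorem apply_algHom_of_unique (hw : IsVal w) (hext : ∀ a, w (algebraMap K E a) = v a)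
    (huniq : ∀ w' : E → WithTop Λ, IsVal w' → (∀ a, w' (algebraMap K E a) = v a) → w' = w)
    (τ : E →ₐ[K] E) (x : E) : w (τ x) = w x :=
  congrFun (huniq _ (hw.comp τ.toRingHom) fun a => by simp [hext]) x

theorem krasner [IsOrderedAddMonoid Λ] [IsAlgClosed E] [Algebra.IsAlgebraic K E]
    (hw : IsVal w) (hext : ∀ a, w (algebraMap K E a) = v a)
    (huniq : ∀ w' : E → WithTop Λ, IsVal w' → (∀ a, w' (algebraMap K E a) = v a) → w' = w)
    {θ β : E} (hsep : IsSeparable K θ)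
    (hclose : ∀ θ', aeval θ' (minpoly K θ) = 0 → θ' ≠ θ → w (θ - θ') < w (θ - β)) :
    θ ∈ K⟮β⟯ := by
  by_contra hθ
  obtain ⟨σ, hσθ, hσβ⟩ : ∃ σ : E →ₐ[K] E, σ θ ≠ θ ∧ σ β = β := by
    obtain ⟨τ, hτθ⟩ := exists_algHom_apply_ne hsep hθ
    exact ⟨τ.restrictScalars K, hτθ, τ.commutes ⟨β, mem_adjoin_simple_self K β⟩⟩
  have hconj : aeval (σ θ) (minpoly K θ) = 0 := by
    rw [aeval_algHom_apply, minpoly.aeval, map_zero]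
  have hfar : w (σ θ - β) = w (θ - β) := by
    rw [← hw.apply_algHom_of_unique hext huniq σ (θ - β), map_sub, hσβ]
  have hle : w (θ - β) ≤ w (θ - σ θ) := calc
    w (θ - β) = min (w (θ - β)) (w (β - σ θ)) := by rw [hw.map_sub_comm β, hfar, min_self]
    _ ≤ w (θ - β + (β - σ θ)) := hw.2.2.2 _ _
    _ = w (θ - σ θ) := by rw [sub_add_sub_cancel]
  exact (hle.trans_lt (hclose _ hconj hσθ)).false

end IsVal

theorem krasner_bound_general {K : Type*} [Field K] {Λ : Type*} [AddCommGroup Λ] [LinearOrder Λ] [IsOrderedAddMonoid Λ]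
    (v : K → WithTop Λ)
    (vbar : AlgebraicClosure K → WithTop Λ) (hvbar : IsVal vbar)
    (hextbar : ∀ a : K, vbar (algebraMap K (AlgebraicClosure K) a) = v a)
    (hhens : ∀ w : AlgebraicClosure K → WithTop Λ, IsVal w →
      (∀ a : K, w (algebraMap K (AlgebraicClosure K) a) = v a) → w = vbar)
    (F : Polynomial K) (hFm : F.Monic) (hFirr : Irreducible F) (hFsep : F.Separable)
    (θ : AlgebraicClosure K) (hθ : Polynomial.aeval θ F = 0)
    (Ω : WithTop Λ)
    (hub : ∀ θ' : AlgebraicClosure K, Polynomial.aeval θ' F = 0 → θ' ≠ θ →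
      vbar (θ - θ') ≤ Ω) :
    ∀ g : Polynomial K, g.Monic → 0 < g.natDegree → g.natDegree < F.natDegree →
      vbar (Polynomial.aeval θ g) ≤ g.natDegree • Ω := by
  intro g hgm _ hgF
  have hmin : minpoly K θ = F := (minpoly.eq_of_irreducible_of_monic hFirr hθ hFm).symm
  refine hvbar.aeval_le_natDegree_nsmul hgm fun β hβ => ?_
  by_contra! hfar
  have hθβ : θ ∈ K⟮β⟯ := hvbar.krasner hextbar hhens (by rwa [IsSeparable, hmin])
    fun θ' hθ' hne => (hub θ' (hmin ▸ hθ') hne).trans_lt hfar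
  have hFβ := natDegree_minpoly_le_of_mem_adjoin_simple (Algebra.IsIntegral.isIntegral β) hθβ
  have hβg := natDegree_le_of_dvd (minpoly.dvd K β hβ) hgm.ne_zero
  rw [hmin] at hFβ
  omega

/-- Krasner bound. If `F` is monic irreducible separable of degree `n > 1` with
root `θ` and Krasner constant `Ω(F) = max { v(θ - θ') : θ' ∈ Z(F), θ' ≠ θ }`, then every monic
`g` with `0 < deg g < n` satisfies `v(g(θ))/deg g ≤ Ω(F)`. -/
theorem krasner_bound {K : Type*} [Field K] {Λ : Type*} [AddCommGroup Λ] [LinearOrder Λ] [IsOrderedAddMonoid Λ]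
    (v : K → WithTop Λ) (hv : IsVal v)
    (vbar : AlgebraicClosure K → WithTop Λ) (hvbar : IsVal vbar)
    (hextbar : ∀ a : K, vbar (algebraMap K (AlgebraicClosure K) a) = v a)
    (hhens : ∀ w : AlgebraicClosure K → WithTop Λ, IsVal w →
      (∀ a : K, w (algebraMap K (AlgebraicClosure K) a) = v a) → w = vbar)
    (F : Polynomial K) (hFm : F.Monic) (hFirr : Irreducible F) (hFsep : F.Separable)
    (hn : 1 < F.natDegree) (θ : AlgebraicClosure K) (hθ : Polynomial.aeval θ F = 0)
    (Ω : WithTop Λ)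
    (hub : ∀ θ' : AlgebraicClosure K, Polynomial.aeval θ' F = 0 → θ' ≠ θ →
      vbar (θ - θ') ≤ Ω)
    (hattain : ∃ θ' : AlgebraicClosure K, Polynomial.aeval θ' F = 0 ∧ θ' ≠ θ ∧
      vbar (θ - θ') = Ω) :
    ∀ g : Polynomial K, g.Monic → 0 < g.natDegree → g.natDegree < F.natDegree →
      vbar (Polynomial.aeval θ g) ≤ g.natDegree • Ω :=
  krasner_bound_general v vbar hvbar hextbar hhens F hFm hFirr hFsep θ hθ Ω hub
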